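/- arXiv:2505.09959 — 2 statements merged into one kernel-verified Lean document; each statement's English description precedes it below -/
import Mathlib

section
/- The RAG operator T is a contraction mapping with respect to the L∞ (sup) norm with Lipschitz constant γ: for all bounded functions D, D' : S × S → ℝ, ‖T D − T D'‖_∞ ≤ γ·‖D − D'‖_∞; in particular, for all states s_i, s_j, |(T D)(s_i,s_j) − (T D')(s_i,s_j)| ≤ γ·‖D − D'‖_∞. -/
open Finset

/-- The RAG operator: `(T D)(s_i, s_j) = c(s_i, s_j) + γ · Σ_{a_i} Σ_{a_j}
π(a_i|s_i)·π(a_j|s_j)·D(g(s_i,a_i), g(s_j,a_j))`, where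
`c(s_i, s_j) = |Σ_a π(a|s_i)·r(s_i,a) − Σ_a π(a|s_j)·r(s_j,a)|`. -/
noncomputable def ragT {S A : Type*} [Fintype A] (γ : ℝ) (pol : S → A → ℝ)
    (r : S → A → ℝ) (g : S → A → S) (D : S × S → ℝ) : S × S → ℝ :=
  fun p =>
    |(∑ a, pol p.1 a * r p.1 a) - (∑ a, pol p.2 a * r p.2 a)| +
      γ * ∑ ai, ∑ aj, pol p.1 ai * pol p.2 aj * D (g p.1 ai, g p.2 aj)

/-! The reward cost is the same in `T D` and `T D'`, so `T D - T D'` is `γ` times an average,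
under the product weights `π(·|s_i) ⊗ π(·|s_j)`, of values of `D - D'`; an average of numbers
bounded in absolute value by `‖D - D'‖_∞` is bounded by it as well. -/

theorem BddAbove.abs_sub {ι : Type*} {f f' : ι → ℝ}
    (hf : BddAbove (Set.range fun i => |f i|)) (hf' : BddAbove (Set.range fun i => |f' i|)) :
    BddAbove (Set.range fun i => |f i - f' i|) := by
  obtain ⟨B, hB⟩ := hf
  obtain ⟨B', hB'⟩ := hf'
  refine ⟨B + B', ?_⟩
  rintro _ ⟨i, rfl⟩
  calc |f i - f' i| ≤ |f i| + |f' i| := _root_.abs_sub _ _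
    _ ≤ B + B' := add_le_add (hB ⟨i, rfl⟩) (hB' ⟨i, rfl⟩)

theorem abs_sum_mul_le_of_sum_eq_one {ι : Type*} [Fintype ι] {w x : ι → ℝ} {M : ℝ}
    (hw0 : ∀ i, 0 ≤ w i) (hw1 : ∑ i, w i = 1) (hx : ∀ i, |x i| ≤ M) :
    |∑ i, w i * x i| ≤ M :=
  calc |∑ i, w i * x i| ≤ ∑ i, |w i * x i| := abs_sum_le_sum_abs _ _
    _ = ∑ i, w i * |x i| := by simp only [abs_mul, abs_of_nonneg (hw0 _)]
    _ ≤ ∑ i, w i * M := sum_le_sum fun i _ => mul_le_mul_of_nonneg_left (hx i) (hw0 i)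
    _ = M := by rw [← sum_mul, hw1, one_mul]

theorem ragT_sub_ragT {S A : Type*} [Fintype A] (γ : ℝ) (pol r : S → A → ℝ) (g : S → A → S)
    (D D' : S × S → ℝ) (p : S × S) :
    ragT γ pol r g D p - ragT γ pol r g D' p =
      γ * ∑ ai, pol p.1 ai * ∑ aj, pol p.2 aj *
        (D (g p.1 ai, g p.2 aj) - D' (g p.1 ai, g p.2 aj)) := by
  simp only [ragT, mul_sum, mul_sub, sum_sub_distrib, mul_assoc]
  ring

theorem abs_ragT_sub_ragT_le {S A : Type*} [Fintype A] {γ : ℝ} (hγ0 : 0 ≤ γ)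
    {pol : S → A → ℝ} (hpol0 : ∀ s a, 0 ≤ pol s a) (hpol1 : ∀ s, ∑ a, pol s a = 1)
    (r : S → A → ℝ) (g : S → A → S) {D D' : S × S → ℝ} {M : ℝ}
    (hM : ∀ q, |D q - D' q| ≤ M) (p : S × S) :
    |ragT γ pol r g D p - ragT γ pol r g D' p| ≤ γ * M := by
  rw [ragT_sub_ragT, abs_mul, abs_of_nonneg hγ0]
  refine mul_le_mul_of_nonneg_left ?_ hγ0
  exact abs_sum_mul_le_of_sum_eq_one (hpol0 _) (hpol1 _) fun ai =>
    abs_sum_mul_le_of_sum_eq_one (hpol0 _) (hpol1 _) fun aj => hM _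

theorem ragT_contraction_general {S A : Type*} [Nonempty S] [Fintype A]
    (γ : ℝ) (hγ0 : 0 ≤ γ)
    (pol : S → A → ℝ) (hpol0 : ∀ s a, 0 ≤ pol s a) (hpol1 : ∀ s, ∑ a, pol s a = 1)
    (r : S → A → ℝ)
    (g : S → A → S)
    (D D' : S × S → ℝ)
    (hD : BddAbove (Set.range fun p : S × S => |D p|))
    (hD' : BddAbove (Set.range fun p : S × S => |D' p|)) :
    (⨆ p : S × S, |ragT γ pol r g D p - ragT γ pol r g D' p|) ≤
        γ * (⨆ p : S × S, |D p - D' p|) ∧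
      ∀ si sj : S, |ragT γ pol r g D (si, sj) - ragT γ pol r g D' (si, sj)| ≤
        γ * (⨆ p : S × S, |D p - D' p|) := by
  have hpointwise : ∀ p, |ragT γ pol r g D p - ragT γ pol r g D' p| ≤
      γ * ⨆ q : S × S, |D q - D' q| :=
    abs_ragT_sub_ragT_le hγ0 hpol0 hpol1 r g fun q => le_ciSup (hD.abs_sub hD') q
  exact ⟨ciSup_le hpointwise, fun si sj => hpointwise (si, sj)⟩

/-- The RAG operator is a γ-contraction in the sup norm:
`‖T D − T D'‖_∞ ≤ γ·‖D − D'‖_∞`, and pointwise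
`|(T D)(s_i,s_j) − (T D')(s_i,s_j)| ≤ γ·‖D − D'‖_∞`. -/
theorem ragT_contraction {S A : Type*} [Nonempty S] [Fintype A] [Nonempty A]
    (γ : ℝ) (hγ0 : 0 ≤ γ) (hγ1 : γ < 1)
    (pol : S → A → ℝ) (hpol0 : ∀ s a, 0 ≤ pol s a) (hpol1 : ∀ s, ∑ a, pol s a = 1)
    (r : S → A → ℝ) (hr : BddAbove (Set.range fun q : S × A => |r q.1 q.2|))
    (g : S → A → S)
    (D D' : S × S → ℝ)
    (hD : BddAbove (Set.range fun p : S × S => |D p|))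
    (hD' : BddAbove (Set.range fun p : S × S => |D' p|)) :
    (⨆ p : S × S, |ragT γ pol r g D p - ragT γ pol r g D' p|) ≤
        γ * (⨆ p : S × S, |D p - D' p|) ∧
      ∀ si sj : S, |ragT γ pol r g D (si, sj) - ragT γ pol r g D' (si, sj)| ≤
        γ * (⨆ p : S × S, |D p - D' p|) :=
  ragT_contraction_general γ hγ0 pol hpol0 hpol1 r g D D' hD hD'
end

section
/- Value function difference bound: let V : S → ℝ be a bounded function satisfying the Bellman equation V(s) = Σ_a π(a|s)·(r(s,a) + γ·V(g(s,a))) for all s, and let D^π be the bounded fixed point of the RAG operator T. Then for all states s_i, s_j, |V(s_i) − V(s_j)| ≤ D^π(s_i, s_j). -/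
/-!
Let `M` be the supremum of the gap `|V sᵢ - V sⱼ| - D^π(sᵢ, sⱼ)`, which is finite because `V` and
`D^π` are bounded. Subtracting the fixed-point equation of `D^π` from the Bellman equations at
`sᵢ` and `sⱼ`, the reward terms are dominated by the cost `c(sᵢ, sⱼ)`, and what remains is `γ`
times a convex combination of gaps at successor pairs, hence at most `γ * M`. So `M ≤ γ * M`,
and `γ < 1` forces `M ≤ 0`.
-/

open Finset

section ProductWeights

variable {ι κ : Type*} [Fintype ι] [Fintype κ] {p : ι → ℝ} {q : κ → ℝ}

theorem sum_sum_mul_sub_eq (hp : ∑ i, p i = 1) (hq : ∑ j, q j = 1) (x : ι → ℝ) (y : κ → ℝ) :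
    ∑ i, ∑ j, p i * q j * (x i - y j) = ∑ i, p i * x i - ∑ j, q j * y j := by
  have hx : ∑ i, ∑ j, p i * q j * x i = (∑ i, p i * x i) * ∑ j, q j := by
    rw [sum_mul_sum]; congr! 2; ring
  have hy : ∑ i, ∑ j, p i * q j * y j = (∑ i, p i) * ∑ j, q j * y j := by
    rw [sum_mul_sum]; congr! 2; ring
  simp only [mul_sub, sum_sub_distrib, hx, hy, hp, hq, one_mul, mul_one]

theorem sum_sum_mul_le_of_le (hp0 : ∀ i, 0 ≤ p i) (hq0 : ∀ j, 0 ≤ q j)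
    (hp : ∑ i, p i = 1) (hq : ∑ j, q j = 1) {h : ι → κ → ℝ} {M : ℝ} (hM : ∀ i j, h i j ≤ M) :
    ∑ i, ∑ j, p i * q j * h i j ≤ M :=
  calc ∑ i, ∑ j, p i * q j * h i j
      ≤ ∑ i, ∑ j, p i * q j * M := by
        gcongr with i _ j _
        exacts [mul_nonneg (hp0 i) (hq0 j), hM i j]
    _ = M := by simp only [← sum_mul, ← mul_sum, hq, mul_one, hp, one_mul]

theorem abs_sum_sum_mul_le (hp0 : ∀ i, 0 ≤ p i) (hq0 : ∀ j, 0 ≤ q j) (h : ι → κ → ℝ) :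
    |∑ i, ∑ j, p i * q j * h i j| ≤ ∑ i, ∑ j, p i * q j * |h i j| := by
  refine (abs_sum_le_sum_abs _ _).trans (sum_le_sum fun i _ => ?_)
  refine (abs_sum_le_sum_abs _ _).trans (sum_le_sum fun j _ => ?_)
  rw [abs_mul, abs_of_nonneg (mul_nonneg (hp0 i) (hq0 j))]

end ProductWeights

theorem nonpos_of_le_mul_sSup {X : Type*} {f : X → ℝ} {γ : ℝ} (hγ : γ < 1)
    (hf : BddAbove (Set.range f)) (h : ∀ x, f x ≤ γ * sSup (Set.range f)) (x : X) : f x ≤ 0 := by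
  have hM : sSup (Set.range f) ≤ γ * sSup (Set.range f) :=
    csSup_le ⟨f x, x, rfl⟩ (Set.forall_mem_range.2 h)
  have hM0 : sSup (Set.range f) ≤ 0 := by nlinarith
  exact (le_csSup hf ⟨x, rfl⟩).trans hM0

theorem bddAbove_range_abs_sub_sub {X : Type*} {V : X → ℝ} {D : X × X → ℝ}
    (hV : BddAbove (Set.range fun x => |V x|)) (hD : BddAbove (Set.range fun p => |D p|)) :
    BddAbove (Set.range fun p : X × X => |V p.1 - V p.2| - D p) := by
  obtain ⟨CV, hCV⟩ := hV
  obtain ⟨CD, hCD⟩ := hD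
  refine ⟨CV + CV + CD, Set.forall_mem_range.2 fun p => ?_⟩
  have h1 := hCV ⟨p.1, rfl⟩
  have h2 := hCV ⟨p.2, rfl⟩
  have h3 := hCD ⟨p, rfl⟩
  have := abs_sub (V p.1) (V p.2)
  have := neg_le_abs (D p)
  simp only at h1 h2 h3 ⊢
  linarith

section Bellman

variable {S A : Type*} [Fintype A] {γ : ℝ} {pol : S → A → ℝ} {r : S → A → ℝ} {g : S → A → S}
  {V : S → ℝ}

theorem sub_eq_of_bellman (hpol1 : ∀ s, ∑ a, pol s a = 1)
    (hBellman : ∀ s, V s = ∑ a, pol s a * (r s a + γ * V (g s a))) (si sj : S) :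
    V si - V sj = (∑ a, pol si a * r si a - ∑ a, pol sj a * r sj a) +
      γ * ∑ ai, ∑ aj, pol si ai * pol sj aj * (V (g si ai) - V (g sj aj)) := by
  have split (s : S) : ∑ a, pol s a * (r s a + γ * V (g s a)) =
      ∑ a, pol s a * r s a + γ * ∑ a, pol s a * V (g s a) := by
    simp only [mul_add, sum_add_distrib, mul_sum, mul_left_comm γ]
  rw [sum_sum_mul_sub_eq (hpol1 si) (hpol1 sj), hBellman si, hBellman sj, split, split]
  ring

theorem abs_sub_sub_ragT_le (hγ0 : 0 ≤ γ) (hpol0 : ∀ s a, 0 ≤ pol s a)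
    (hpol1 : ∀ s, ∑ a, pol s a = 1)
    (hBellman : ∀ s, V s = ∑ a, pol s a * (r s a + γ * V (g s a))) (D : S × S → ℝ) (si sj : S) :
    |V si - V sj| - ragT γ pol r g D (si, sj) ≤
      γ * ∑ ai, ∑ aj,
        pol si ai * pol sj aj * (|V (g si ai) - V (g sj aj)| - D (g si ai, g sj aj)) := by
  have hV : |V si - V sj| ≤ |∑ a, pol si a * r si a - ∑ a, pol sj a * r sj a| +
      γ * ∑ ai, ∑ aj, pol si ai * pol sj aj * |V (g si ai) - V (g sj aj)| := by
    rw [sub_eq_of_bellman hpol1 hBellman si sj]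
    refine (abs_add_le _ _).trans (add_le_add_right ?_ _)
    rw [abs_mul, abs_of_nonneg hγ0]
    exact mul_le_mul_of_nonneg_left (abs_sum_sum_mul_le (hpol0 si) (hpol0 sj) _) hγ0
  simp only [ragT, mul_sub, sum_sub_distrib]
  linarith

end Bellman

theorem value_diff_le_ragT_fixedPoint_general {S A : Type*} [Fintype A]
    (γ : ℝ) (hγ0 : 0 ≤ γ) (hγ1 : γ < 1)
    (pol : S → A → ℝ) (hpol0 : ∀ s a, 0 ≤ pol s a) (hpol1 : ∀ s, ∑ a, pol s a = 1)
    (r : S → A → ℝ)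
    (g : S → A → S)
    (V : S → ℝ) (hV : BddAbove (Set.range fun s : S => |V s|))
    (hBellman : ∀ s : S, V s = ∑ a, pol s a * (r s a + γ * V (g s a)))
    (Dpi : S × S → ℝ) (hDpi : BddAbove (Set.range fun p : S × S => |Dpi p|))
    (hfix : ragT γ pol r g Dpi = Dpi) :
    ∀ si sj : S, |V si - V sj| ≤ Dpi (si, sj) := by
  set gap : S × S → ℝ := fun p => |V p.1 - V p.2| - Dpi p
  have hgap : BddAbove (Set.range gap) := bddAbove_range_abs_sub_sub hV hDpi
  have contraction (p : S × S) : gap p ≤ γ * sSup (Set.range gap) := by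
    obtain ⟨si, sj⟩ := p
    calc gap (si, sj) = |V si - V sj| - ragT γ pol r g Dpi (si, sj) := by rw [hfix]
      _ ≤ γ * ∑ ai, ∑ aj, pol si ai * pol sj aj * gap (g si ai, g sj aj) :=
        abs_sub_sub_ragT_le hγ0 hpol0 hpol1 hBellman Dpi si sj
      _ ≤ γ * sSup (Set.range gap) := by
        gcongr
        exact sum_sum_mul_le_of_le (hpol0 si) (hpol0 sj) (hpol1 si) (hpol1 sj)
          fun ai aj => le_csSup hgap ⟨_, rfl⟩
  intro si sj
  exact sub_nonpos.1 (nonpos_of_le_mul_sSup hγ1 hgap contraction (si, sj))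

/-- Value function difference bound: if `V` is a bounded solution of the
expected-state Bellman equation and `D^π` is the bounded fixed point of the RAG
operator, then `|V(s_i) − V(s_j)| ≤ D^π(s_i, s_j)` for all states. -/
theorem value_diff_le_ragT_fixedPoint {S A : Type*} [Nonempty S] [Fintype A] [Nonempty A]
    (γ : ℝ) (hγ0 : 0 ≤ γ) (hγ1 : γ < 1)
    (pol : S → A → ℝ) (hpol0 : ∀ s a, 0 ≤ pol s a) (hpol1 : ∀ s, ∑ a, pol s a = 1)
    (r : S → A → ℝ) (hr : BddAbove (Set.range fun q : S × A => |r q.1 q.2|))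
    (g : S → A → S)
    (V : S → ℝ) (hV : BddAbove (Set.range fun s : S => |V s|))
    (hBellman : ∀ s : S, V s = ∑ a, pol s a * (r s a + γ * V (g s a)))
    (Dpi : S × S → ℝ) (hDpi : BddAbove (Set.range fun p : S × S => |Dpi p|))
    (hfix : ragT γ pol r g Dpi = Dpi) :
    ∀ si sj : S, |V si - V sj| ≤ Dpi (si, sj) :=
  value_diff_le_ragT_fixedPoint_general γ hγ0 hγ1 pol hpol0 hpol1 r g V hV hBellman Dpi hDpi hfix
end
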